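/- Tchebyshev/Markov system property: if f is a real-valued, nonvanishing continuous function on [-b,b], then for every n the functions φ_0, …, φ_n of the recursive-integral system built from f are linearly independent, and every nontrivial linear combination ∑_{k=0}^n c_k φ_k has at most n zeros in [-b,b]. -/

import Mathlib

/-- The recursive integrals `X̃⁽ⁿ⁾` (real-valued case). -/
noncomputable def XtR (f : ℝ → ℝ) (x₀ : ℝ) : ℕ → ℝ → ℝ
  | 0 => fun _ => 1
  | n + 1 => fun x => (n + 1 : ℝ) * ∫ s in x₀..x, XtR f x₀ n s * (f s ^ 2) ^ ((-1 : ℤ) ^ n)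

/-- The recursive integrals `X⁽ⁿ⁾` (real-valued case). -/
noncomputable def XrR (f : ℝ → ℝ) (x₀ : ℝ) : ℕ → ℝ → ℝ
  | 0 => fun _ => 1
  | n + 1 => fun x => (n + 1 : ℝ) * ∫ s in x₀..x, XrR f x₀ n s * (f s ^ 2) ^ ((-1 : ℤ) ^ (n + 1))

/-- The system `φ_k` (real-valued case). -/
noncomputable def phiSysR (f : ℝ → ℝ) (x₀ : ℝ) (k : ℕ) (x : ℝ) : ℝ :=
  if k % 2 = 1 then f x * XrR f x₀ k x else f x * XtR f x₀ k x

/-!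
Dividing a combination `∑ c_k φ_k` by `f` and differentiating gives `(∑ (j + 1) c_{j+1} ψ_j) / f`,
where `ψ` is the system built from `1 / f` (passing to `1 / f` swaps the roles of `X` and `X̃`).
By Rolle's theorem a function has at most one more zero than its derivative, so induction on `n`
bounds the zeros of a nontrivial combination by `n`; one that vanishes on all of `[-b, b]` has
infinitely many zeros and is therefore trivial. Since the `φ_k` only see `f` on `[-b, b]`, `f` may
first be replaced by a continuous nonvanishing extension to `ℝ`.
-/

open Set

lemma inv_sq_zpow_neg_one_pow (a : ℝ) (n : ℕ) :
    (a⁻¹ ^ 2) ^ ((-1 : ℤ) ^ n) = (a ^ 2) ^ ((-1 : ℤ) ^ (n + 1)) := by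
  rw [inv_pow, inv_zpow', pow_succ (-1 : ℤ) n, mul_neg_one]

lemma XtR_inv (f : ℝ → ℝ) (x₀ : ℝ) (n : ℕ) : XtR (fun x => (f x)⁻¹) x₀ n = XrR f x₀ n := by
  induction n with
  | zero => rfl
  | succ n ih => simp only [XtR, XrR, ih, inv_sq_zpow_neg_one_pow]

lemma XrR_inv (f : ℝ → ℝ) (x₀ : ℝ) (n : ℕ) : XrR (fun x => (f x)⁻¹) x₀ n = XtR f x₀ n := by
  simpa using (XtR_inv (fun x => (f x)⁻¹) x₀ n).symm

@[simp]
lemma phiSysR_zero (f : ℝ → ℝ) (x₀ x : ℝ) : phiSysR f x₀ 0 x = f x := by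
  simp [phiSysR, XtR]

lemma phiSysR_inv (f : ℝ → ℝ) (x₀ : ℝ) (k : ℕ) (x : ℝ) :
    phiSysR (fun y => (f y)⁻¹) x₀ k x =
      (f x)⁻¹ * if k % 2 = 1 then XtR f x₀ k x else XrR f x₀ k x := by
  simp only [phiSysR, XtR_inv, XrR_inv, mul_ite]

section Regularity

variable {f : ℝ → ℝ} (hf : Continuous f) (hf0 : ∀ x, f x ≠ 0) (x₀ : ℝ)
include hf hf0

lemma continuous_sq_zpow (m : ℤ) : Continuous fun x => (f x ^ 2) ^ m :=
  (hf.pow 2).zpow₀ m fun x => Or.inl (pow_ne_zero 2 (hf0 x))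

lemma continuous_XtR : ∀ n, Continuous (XtR f x₀ n)
  | 0 => continuous_const
  | n + 1 => continuous_const.mul <| intervalIntegral.continuous_primitive
      (fun _ _ => ((continuous_XtR n).mul (continuous_sq_zpow hf hf0 _)).intervalIntegrable _ _) x₀

lemma hasDerivAt_XtR_succ (n : ℕ) (x : ℝ) :
    HasDerivAt (XtR f x₀ (n + 1))
      ((n + 1) * (XtR f x₀ n x * (f x ^ 2) ^ ((-1 : ℤ) ^ n))) x :=
  (((continuous_XtR hf hf0 x₀ n).mul (continuous_sq_zpow hf hf0 _)).integral_hasStrictDerivAt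
    x₀ x).hasDerivAt.const_mul _

lemma hasDerivAt_XrR_succ (n : ℕ) (x : ℝ) :
    HasDerivAt (XrR f x₀ (n + 1))
      ((n + 1) * (XrR f x₀ n x * (f x ^ 2) ^ ((-1 : ℤ) ^ (n + 1)))) x := by
  simpa only [XtR_inv, inv_sq_zpow_neg_one_pow] using
    hasDerivAt_XtR_succ (f := fun x => (f x)⁻¹) (hf.inv₀ hf0) (fun x => inv_ne_zero (hf0 x))
      x₀ n x

/-- In the paper's notation: `d₁^f φ_{k+1} = (k + 1) ψ_k`, with `ψ` the system for `1 / f`. -/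
lemma hasDerivAt_phiSysR_succ_div (k : ℕ) (x : ℝ) :
    HasDerivAt (fun y => phiSysR f x₀ (k + 1) y / f y)
      ((k + 1) * phiSysR (fun y => (f y)⁻¹) x₀ k x / f x) x := by
  rcases Nat.even_or_odd k with hk | hk
  · have hk0 : k % 2 = 0 := Nat.even_iff.mp hk
    have hquot : (fun y => phiSysR f x₀ (k + 1) y / f y) = XrR f x₀ (k + 1) := by
      ext y
      simp [phiSysR, Nat.succ_mod_two_eq_one_iff.mpr hk0, hf0 y]
    rw [hquot]
    convert hasDerivAt_XrR_succ hf hf0 x₀ k x using 1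
    rw [phiSysR_inv, if_neg (by omega), hk.add_one.neg_one_pow]
    field_simp
  · have hk1 : k % 2 = 1 := Nat.odd_iff.mp hk
    have hquot : (fun y => phiSysR f x₀ (k + 1) y / f y) = XtR f x₀ (k + 1) := by
      ext y
      simp [phiSysR, Nat.succ_mod_two_eq_zero_iff.mpr hk1, hf0 y]
    rw [hquot]
    convert hasDerivAt_XtR_succ hf hf0 x₀ k x using 1
    rw [phiSysR_inv, if_pos hk1, hk.neg_one_pow]
    field_simp

lemma hasDerivAt_sum_phiSysR_div (n : ℕ) (c : ℕ → ℝ) (x : ℝ) :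
    HasDerivAt (fun y => (∑ k ∈ Finset.range (n + 2), c k * phiSysR f x₀ k y) / f y)
      ((∑ j ∈ Finset.range (n + 1),
        (j + 1) * c (j + 1) * phiSysR (fun y => (f y)⁻¹) x₀ j x) / f x) x := by
  have hquot : (fun y => (∑ k ∈ Finset.range (n + 2), c k * phiSysR f x₀ k y) / f y) =
      fun y => ∑ j ∈ Finset.range (n + 1), c (j + 1) * (phiSysR f x₀ (j + 1) y / f y) + c 0 := by
    ext y
    rw [Finset.sum_range_succ', add_div, Finset.sum_div, phiSysR_zero,
      mul_div_cancel_right₀ _ (hf0 y)]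
    simp only [mul_div_assoc]
  rw [hquot, Finset.sum_div]
  refine ((HasDerivAt.fun_sum fun j _ =>
    (hasDerivAt_phiSysR_succ_div hf hf0 x₀ j x).const_mul (c (j + 1))).add_const (c 0)).congr_deriv
      (Finset.sum_congr rfl fun j _ => by ring)

end Regularity

theorem encard_setOf_eq_zero_le_of_hasDerivAt {g g' : ℝ → ℝ} (hg : ∀ x, HasDerivAt g (g' x) x) :
    {x | g x = 0}.encard ≤ {x | g' x = 0}.encard + 1 := by
  obtain hT | hT := {x | g' x = 0}.finite_or_infinite
  swap
  · simp [hT.encard_eq]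
  have hgc : Continuous g := Differentiable.continuous fun x => (hg x).differentiableAt
  have hcard : ∀ s : Finset ℝ, ↑s ⊆ {x | g x = 0} → s.card ≤ hT.toFinset.card + 1 := by
    intro s hs
    refine Finset.card_le_of_interleaved fun x hx y hy hxy _ => ?_
    obtain ⟨z, hz, hz0⟩ := exists_hasDerivAt_eq_zero hxy hgc.continuousOn
      ((hs hx).trans (hs hy).symm) fun z _ => hg z
    exact ⟨z, hT.mem_toFinset.mpr hz0, hz⟩
  rw [hT.encard_eq_coe_toFinset_card]
  by_contra! hlt
  obtain ⟨u, hu, hucard⟩ := exists_subset_encard_eq (Order.add_one_le_of_lt hlt)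
  have hufin : u.Finite := finite_of_encard_eq_coe hucard
  have := hcard hufin.toFinset (by simpa using hu)
  rw [hufin.encard_eq_coe_toFinset_card] at hucard
  norm_cast at hucard
  omega

theorem encard_setOf_sum_phiSysR_eq_zero_le (x₀ : ℝ) (n : ℕ) {f : ℝ → ℝ} (hf : Continuous f)
    (hf0 : ∀ x, f x ≠ 0) {c : ℕ → ℝ} (hc : ∃ k ≤ n, c k ≠ 0) :
    {x | ∑ k ∈ Finset.range (n + 1), c k * phiSysR f x₀ k x = 0}.encard ≤ n := by
  induction n generalizing f c with
  | zero =>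
    obtain ⟨k, hk, hck⟩ := hc
    obtain rfl : k = 0 := Nat.le_zero.mp hk
    simp [hck, hf0]
  | succ n ih =>
    by_cases htail : ∃ j ≤ n, c (j + 1) ≠ 0
    · obtain ⟨j, hj, hcj⟩ := htail
      calc {x | ∑ k ∈ Finset.range (n + 2), c k * phiSysR f x₀ k x = 0}.encard
          ≤ {x | ∑ j ∈ Finset.range (n + 1),
              (j + 1) * c (j + 1) * phiSysR (fun y => (f y)⁻¹) x₀ j x = 0}.encard + 1 := by
            simpa [hf0] using encard_setOf_eq_zero_le_of_hasDerivAt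
              (hasDerivAt_sum_phiSysR_div hf hf0 x₀ n c)
        _ ≤ n + 1 := by
            gcongr
            exact ih (hf.inv₀ hf0) (fun x => inv_ne_zero (hf0 x))
              ⟨j, hj, mul_ne_zero (by positivity) hcj⟩
    · push Not at htail
      have hc0 : c 0 ≠ 0 := by
        obtain ⟨k, hk, hck⟩ := hc
        rcases k with _ | j
        · exact hck
        · exact absurd (htail j (by omega)) hck
      have hsum (x : ℝ) : ∑ k ∈ Finset.range (n + 2), c k * phiSysR f x₀ k x = c 0 * f x := by
        rw [Finset.sum_range_succ', Finset.sum_eq_zero fun j hj => by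
          rw [htail j (Nat.lt_succ_iff.mp (Finset.mem_range.mp hj)), zero_mul], zero_add,
          phiSysR_zero]
      simp [hsum, hc0, hf0]

section Locality

variable {f g : ℝ → ℝ} {s : Set ℝ} {x₀ : ℝ}

lemma XtR_congr (hs : s.OrdConnected) (hx₀ : x₀ ∈ s) (hfg : EqOn f g s) (n : ℕ) :
    EqOn (XtR f x₀ n) (XtR g x₀ n) s := by
  induction n with
  | zero => exact fun _ _ => rfl
  | succ n ih =>
    intro x hx
    simp only [XtR]
    congr 1
    refine intervalIntegral.integral_congr fun y hy => ?_
    have hys := hs.uIcc_subset hx₀ hx hy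
    simp only [ih hys, hfg hys]

lemma XrR_congr (hs : s.OrdConnected) (hx₀ : x₀ ∈ s) (hfg : EqOn f g s) (n : ℕ) :
    EqOn (XrR f x₀ n) (XrR g x₀ n) s := by
  simpa only [XtR_inv] using XtR_congr (f := fun x => (f x)⁻¹) (g := fun x => (g x)⁻¹) hs hx₀
    (fun x hx => congrArg Inv.inv (hfg hx)) n

lemma phiSysR_congr (hs : s.OrdConnected) (hx₀ : x₀ ∈ s) (hfg : EqOn f g s) (k : ℕ) :
    EqOn (phiSysR f x₀ k) (phiSysR g x₀ k) s := fun x hx => by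
  simp only [phiSysR, hfg hx, XtR_congr hs hx₀ hfg k hx, XrR_congr hs hx₀ hfg k hx]

end Locality

lemma ContinuousOn.exists_continuous_ne_zero_eqOn_Icc {a b : ℝ} (hab : a ≤ b) {f : ℝ → ℝ}
    (hf : ContinuousOn f (Icc a b)) (hf0 : ∀ x ∈ Icc a b, f x ≠ 0) :
    ∃ g : ℝ → ℝ, Continuous g ∧ (∀ x, g x ≠ 0) ∧ EqOn g f (Icc a b) :=
  ⟨IccExtend hab ((Icc a b).domRestrict f),
    (continuousOn_iff_continuous_domRestrict.mp hf).Icc_extend',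
    fun x => hf0 _ (projIcc a b hab x).2, fun _ hx => IccExtend_of_mem hab _ hx⟩

/-- Tchebyshev (Markov) system property: for real-valued nonvanishing continuous
`f` on `[-b,b]`, the functions `φ_0, …, φ_n` are linearly independent and every
nontrivial linear combination has at most `n` zeros in `[-b,b]`. -/
theorem stmt_18 (b x₀ : ℝ) (hb : 0 < b) (hx₀ : x₀ ∈ Set.Icc (-b) b)
    (f : ℝ → ℝ) (hf : ContinuousOn f (Set.Icc (-b) b))
    (hf0 : ∀ x ∈ Set.Icc (-b) b, f x ≠ 0) (n : ℕ) :
    (∀ c : ℕ → ℝ,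
        (∀ x ∈ Set.Icc (-b) b, ∑ k ∈ Finset.range (n + 1), c k * phiSysR f x₀ k x = 0) →
        ∀ k ≤ n, c k = 0) ∧
    (∀ c : ℕ → ℝ, (∃ k ≤ n, c k ≠ 0) →
        {x ∈ Set.Icc (-b) b | ∑ k ∈ Finset.range (n + 1), c k * phiSysR f x₀ k x = 0}.Finite ∧
        {x ∈ Set.Icc (-b) b |
          ∑ k ∈ Finset.range (n + 1), c k * phiSysR f x₀ k x = 0}.ncard ≤ n) := by
  obtain ⟨g, hg, hg0, hgf⟩ := hf.exists_continuous_ne_zero_eqOn_Icc (by linarith) hf0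
  have hzeros (c : ℕ → ℝ) (hc : ∃ k ≤ n, c k ≠ 0) :
      {x ∈ Icc (-b) b | ∑ k ∈ Finset.range (n + 1), c k * phiSysR f x₀ k x = 0}.encard ≤ n := by
    refine (encard_le_encard ?_).trans (encard_setOf_sum_phiSysR_eq_zero_le x₀ n hg hg0 hc)
    rintro x ⟨hx, hFx⟩
    rw [mem_ofPred_eq, ← hFx]
    exact Finset.sum_congr rfl fun k _ => by rw [phiSysR_congr ordConnected_Icc hx₀ hgf k hx]
  refine ⟨fun c hc k hk => ?_, fun c hc => encard_le_coe_iff_finite_ncard_le.mp (hzeros c hc)⟩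
  by_contra hck
  have hfin := (encard_le_coe_iff_finite_ncard_le.mp (hzeros c ⟨k, hk, hck⟩)).1
  exact Icc_infinite (by linarith : -b < b) (hfin.subset fun x hx => ⟨hx, hc x hx⟩)
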